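/- Let d ≥ 1, 0 < r < 2, and let (c^ε_{j,k}) be a family of reals indexed by j ∈ ℕ, ε in a finite set E, and k in a countable set, with Σ_{j,k,ε} (c^ε_{j,k})² < ∞. Write b_{j,ε} = Σ_k (c^ε_{j,k})². Then sup_{0 < λ ≤ 1} λ^{r−2} Σ_{j,ε} b_{j,ε} 1{b_{j,ε} ≤ 2^{dj} λ²} < ∞ if and only if sup_{0 < λ ≤ 1} λ^r Σ_{j} 2^{dj} Σ_{ε} 1{b_{j,ε} > 2^{dj} λ²} < ∞. -/

import Mathlib

/-!
Both conditions compare the blocks `b_i` with the thresholds `A_i λ²`. Splitting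
`b_i ≤ A_i λ²` into the layers `A_i (λ/2^(m+1))² < b_i ≤ A_i (λ/2^m)²` bounds the small mass at
`λ` by `∑_m (λ/2^m)²` times the large count at `λ/2^(m+1)`; splitting `b_i > A_i λ²` into the
layers `A_i (λ 2^m)² < b_i ≤ A_i (λ 2^(m+1))²` bounds the large count at `λ` by
`∑_m (λ 2^m)⁻²` times the small mass at `λ 2^(m+1)`. Inserting either condition turns these into
geometric series of ratio `2^(r-2)`, resp. `2^(-r)`, which converge as `0 < r < 2`; scales above
`1` are controlled by the total mass `∑ b_i < ∞`.
-/

open Set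

open scoped ENNReal

noncomputable section

attribute [local instance] Classical.propDecidable

open Filter Topology

namespace WeakBesov

lemma dyadic_scaling_below {lam t : ℝ} (hlam : 0 < lam) (ht : 0 < t) (r : ℝ) :
    lam ^ (r - 2) * (lam / t) ^ 2 * (lam / (t * 2)) ^ (-r) = 2 ^ r * t ^ (r - 2) := by
  simp only [Real.div_rpow hlam.le (by positivity : (0 : ℝ) ≤ t * 2),
    Real.mul_rpow ht.le zero_le_two, Real.rpow_sub hlam, Real.rpow_sub ht, Real.rpow_neg hlam.le,
    Real.rpow_neg ht.le, Real.rpow_neg zero_le_two, Real.rpow_two]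
  field_simp

lemma dyadic_scaling_above {lam t : ℝ} (hlam : 0 < lam) (ht : 0 < t) (r : ℝ) :
    lam ^ r * ((lam * t) ^ 2)⁻¹ * (lam * (t * 2)) ^ (2 - r) = 2 ^ (2 - r) * t ^ (-r) := by
  simp only [Real.mul_rpow hlam.le (by positivity : (0 : ℝ) ≤ t * 2),
    Real.mul_rpow ht.le zero_le_two, Real.rpow_sub hlam, Real.rpow_sub ht,
    Real.rpow_sub zero_lt_two, Real.rpow_neg ht.le, Real.rpow_two]
  field_simp

lemma summable_two_pow_rpow {s : ℝ} (hs : s < 0) : Summable fun m : ℕ => ((2 : ℝ) ^ m) ^ s := by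
  simp_rw [← Real.rpow_pow_comm zero_le_two]
  exact summable_geometric_of_lt_one (by positivity)
    (Real.rpow_lt_one_of_one_lt_of_neg one_lt_two hs)

lemma le_ofReal_rpow_neg_mul {μ s : ℝ} (hμ : 0 < μ) {X C : ℝ≥0∞}
    (h : ENNReal.ofReal (μ ^ s) * X ≤ C) : X ≤ ENNReal.ofReal (μ ^ (-s)) * C :=
  calc X = ENNReal.ofReal (μ ^ (-s)) * (ENNReal.ofReal (μ ^ s) * X) := by
        rw [← mul_assoc, ← ENNReal.ofReal_mul (by positivity), ← Real.rpow_add hμ,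
          neg_add_cancel, Real.rpow_zero, ENNReal.ofReal_one, one_mul]
    _ ≤ ENNReal.ofReal (μ ^ (-s)) * C := by gcongr

-- `x` lies in some dyadic layer `a (λ/2^(m+1))² < x ≤ a (λ/2^m)²`.
lemma ite_ofReal_le_tsum_dyadic_below {a x lam : ℝ} (hlam : 0 < lam) :
    (if x ≤ a * lam ^ 2 then ENNReal.ofReal x else 0) ≤
      ∑' m : ℕ, ENNReal.ofReal ((lam / 2 ^ m) ^ 2) *
        (ENNReal.ofReal a * if a * (lam / 2 ^ (m + 1)) ^ 2 < x then 1 else 0) := by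
  split_ifs with hx
  · rcases le_or_gt x 0 with hx0 | hx0
    · simp [ENNReal.ofReal_of_nonpos hx0]
    have hto : Tendsto (fun n : ℕ => a * (lam / 2 ^ n) ^ 2) atTop (𝓝 0) := by
      simpa using ((tendsto_const_nhds (x := lam)).div_atTop
        (tendsto_pow_atTop_atTop_of_one_lt one_lt_two)).pow 2 |>.const_mul a
    obtain ⟨m, hm, hm1⟩ := Nat.exists_not_and_succ_of_not_zero_of_exists
      (p := fun n => a * (lam / 2 ^ n) ^ 2 < x) (by simpa using hx)
      (hto.eventually (gt_mem_nhds hx0)).exists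
    calc ENNReal.ofReal x ≤ ENNReal.ofReal ((lam / 2 ^ m) ^ 2 * a) :=
          ENNReal.ofReal_le_ofReal (by linarith [not_lt.1 hm])
      _ = ENNReal.ofReal ((lam / 2 ^ m) ^ 2) *
            (ENNReal.ofReal a * if a * (lam / 2 ^ (m + 1)) ^ 2 < x then 1 else 0) := by
          rw [if_pos hm1, mul_one, ENNReal.ofReal_mul (by positivity)]
      _ ≤ _ := ENNReal.le_tsum m
  · exact bot_le

-- `x` lies in some dyadic layer `a (λ 2^m)² < x ≤ a (λ 2^(m+1))²`.
lemma ofReal_mul_ite_le_tsum_dyadic_above {a x lam : ℝ} (ha : 0 < a) (hlam : 0 < lam) :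
    ENNReal.ofReal a * (if a * lam ^ 2 < x then 1 else 0) ≤
      ∑' m : ℕ, ENNReal.ofReal (((lam * 2 ^ m) ^ 2)⁻¹) *
        (if x ≤ a * (lam * 2 ^ (m + 1)) ^ 2 then ENNReal.ofReal x else 0) := by
  split_ifs with hx
  · have hto : Tendsto (fun n : ℕ => a * (lam * 2 ^ n) ^ 2) atTop atTop :=
      ((tendsto_pow_atTop two_ne_zero).comp ((tendsto_pow_atTop_atTop_of_one_lt
        one_lt_two).const_mul_atTop hlam)).const_mul_atTop ha
    obtain ⟨m, hm, hm1⟩ := Nat.exists_not_and_succ_of_not_zero_of_exists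
      (p := fun n => x ≤ a * (lam * 2 ^ n) ^ 2) (by simpa using hx)
      (hto.eventually_ge_atTop x).exists
    calc ENNReal.ofReal a * 1 ≤ ENNReal.ofReal (((lam * 2 ^ m) ^ 2)⁻¹ * x) := by
          rw [mul_one, ← div_eq_inv_mul]
          exact ENNReal.ofReal_le_ofReal
            ((le_div_iff₀ (by positivity)).2 (by linarith [not_le.1 hm]))
      _ = ENNReal.ofReal (((lam * 2 ^ m) ^ 2)⁻¹) *
            (if x ≤ a * (lam * 2 ^ (m + 1)) ^ 2 then ENNReal.ofReal x else 0) := by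
          rw [if_pos hm1, ENNReal.ofReal_mul (by positivity)]
      _ ≤ _ := ENNReal.le_tsum m
  · simp

variable {ι : Type*} (A b : ι → ℝ)

/-- For the theorem, `i = (j, ε)`, `A i = 2^(dj)` and `b i = ∑_k (c^ε_{j,k})²`. -/
def smallPart (lam : ℝ) : ℝ≥0∞ :=
  ∑' i, if b i ≤ A i * lam ^ 2 then ENNReal.ofReal (b i) else 0

def largeCount (lam : ℝ) : ℝ≥0∞ :=
  ∑' i, ENNReal.ofReal (A i) * if A i * lam ^ 2 < b i then 1 else 0

lemma smallPart_le_tsum_ofReal (lam : ℝ) : smallPart A b lam ≤ ∑' i, ENNReal.ofReal (b i) :=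
  ENNReal.tsum_le_tsum fun i => by split_ifs <;> simp

variable {A b}

lemma smallPart_le_tsum_largeCount {lam : ℝ} (hlam : 0 < lam) :
    smallPart A b lam ≤
      ∑' m : ℕ, ENNReal.ofReal ((lam / 2 ^ m) ^ 2) * largeCount A b (lam / 2 ^ (m + 1)) :=
  calc smallPart A b lam
      ≤ ∑' i, ∑' m : ℕ, ENNReal.ofReal ((lam / 2 ^ m) ^ 2) * (ENNReal.ofReal (A i) *
          if A i * (lam / 2 ^ (m + 1)) ^ 2 < b i then 1 else 0) :=
        ENNReal.tsum_le_tsum fun i => ite_ofReal_le_tsum_dyadic_below hlam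
    _ = _ := by simp_rw [largeCount, ← ENNReal.tsum_mul_left]; exact ENNReal.tsum_comm

lemma largeCount_le_tsum_smallPart (hA : ∀ i, 0 < A i) {lam : ℝ} (hlam : 0 < lam) :
    largeCount A b lam ≤
      ∑' m : ℕ, ENNReal.ofReal (((lam * 2 ^ m) ^ 2)⁻¹) * smallPart A b (lam * 2 ^ (m + 1)) :=
  calc largeCount A b lam
      ≤ ∑' i, ∑' m : ℕ, ENNReal.ofReal (((lam * 2 ^ m) ^ 2)⁻¹) *
          (if b i ≤ A i * (lam * 2 ^ (m + 1)) ^ 2 then ENNReal.ofReal (b i) else 0) :=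
        ENNReal.tsum_le_tsum fun i => ofReal_mul_ite_le_tsum_dyadic_above (hA i) hlam
    _ = _ := by simp_rw [smallPart, ← ENNReal.tsum_mul_left]; exact ENNReal.tsum_comm

variable {r : ℝ}

lemma iSup_smallPart_lt_top_of_iSup_largeCount_lt_top (hr2 : r < 2)
    (hB : (⨆ lam ∈ Ioc (0 : ℝ) 1, ENNReal.ofReal (lam ^ r) * largeCount A b lam) < ⊤) :
    (⨆ lam ∈ Ioc (0 : ℝ) 1, ENNReal.ofReal (lam ^ (r - 2)) * smallPart A b lam) < ⊤ := by
  set C := ⨆ lam ∈ Ioc (0 : ℝ) 1, ENNReal.ofReal (lam ^ r) * largeCount A b lam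
  have hlarge : ∀ μ ∈ Ioc (0 : ℝ) 1, largeCount A b μ ≤ ENNReal.ofReal (μ ^ (-r)) * C :=
    fun μ hμ => le_ofReal_rpow_neg_mul hμ.1
      (le_biSup (fun lam => ENNReal.ofReal (lam ^ r) * largeCount A b lam) hμ)
  have hgeom := (summable_two_pow_rpow (by linarith : r - 2 < 0)).mul_left (2 ^ r)
  refine lt_of_le_of_lt (iSup₂_le fun lam ⟨hl0, hl1⟩ => ?_)
    (ENNReal.mul_lt_top hgeom.tsum_ofReal_lt_top hB)
  have hdyad : ∀ m : ℕ, 0 < lam / 2 ^ (m + 1) ∧ lam / 2 ^ (m + 1) ≤ 1 := fun m =>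
    ⟨by positivity, (div_le_self hl0.le (one_le_pow₀ one_le_two)).trans hl1⟩
  calc ENNReal.ofReal (lam ^ (r - 2)) * smallPart A b lam
      ≤ ∑' m : ℕ, ENNReal.ofReal (lam ^ (r - 2)) * (ENNReal.ofReal ((lam / 2 ^ m) ^ 2) *
          (ENNReal.ofReal ((lam / 2 ^ (m + 1)) ^ (-r)) * C)) := by
        rw [ENNReal.tsum_mul_left]
        gcongr
        refine (smallPart_le_tsum_largeCount hl0).trans (ENNReal.tsum_le_tsum fun m => ?_)
        gcongr
        exact hlarge _ (hdyad m)
    _ = ∑' m : ℕ, ENNReal.ofReal (2 ^ r * ((2 : ℝ) ^ m) ^ (r - 2)) * C := by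
        refine tsum_congr fun m => ?_
        rw [← mul_assoc, ← mul_assoc, ← ENNReal.ofReal_mul (by positivity),
          ← ENNReal.ofReal_mul (by positivity), pow_succ (2 : ℝ) m,
          dyadic_scaling_below hl0 (by positivity)]
    _ = (∑' m : ℕ, ENNReal.ofReal (2 ^ r * ((2 : ℝ) ^ m) ^ (r - 2))) * C :=
        ENNReal.tsum_mul_right

/-- Above scale `1` the total mass takes over the role of the supremum. -/
lemma smallPart_le_ofReal_rpow_mul {C : ℝ≥0∞} (hr2 : r < 2)
    (hsmall : ∀ μ ∈ Ioc (0 : ℝ) 1, ENNReal.ofReal (μ ^ (r - 2)) * smallPart A b μ ≤ C)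
    {μ : ℝ} (hμ : 0 < μ) :
    smallPart A b μ ≤ ENNReal.ofReal (μ ^ (2 - r)) * (C + ∑' i, ENNReal.ofReal (b i)) := by
  rcases le_or_gt μ 1 with hμ1 | hμ1
  · calc smallPart A b μ ≤ ENNReal.ofReal (μ ^ (2 - r)) * C := by
          simpa only [neg_sub] using le_ofReal_rpow_neg_mul hμ (hsmall μ ⟨hμ, hμ1⟩)
      _ ≤ _ := by gcongr; exact le_self_add
  · calc smallPart A b μ ≤ 1 * (C + ∑' i, ENNReal.ofReal (b i)) := by
          rw [one_mul]; exact (smallPart_le_tsum_ofReal A b μ).trans le_add_self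
      _ ≤ _ := by
          gcongr
          exact ENNReal.one_le_ofReal.2 (Real.one_le_rpow hμ1.le (by linarith))

lemma iSup_largeCount_lt_top_of_iSup_smallPart_lt_top (hA : ∀ i, 0 < A i)
    (hS : ∑' i, ENNReal.ofReal (b i) ≠ ⊤) (hr0 : 0 < r) (hr2 : r < 2)
    (hsup : (⨆ lam ∈ Ioc (0 : ℝ) 1, ENNReal.ofReal (lam ^ (r - 2)) * smallPart A b lam) < ⊤) :
    (⨆ lam ∈ Ioc (0 : ℝ) 1, ENNReal.ofReal (lam ^ r) * largeCount A b lam) < ⊤ := by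
  set C := (⨆ lam ∈ Ioc (0 : ℝ) 1, ENNReal.ofReal (lam ^ (r - 2)) * smallPart A b lam) +
    ∑' i, ENNReal.ofReal (b i)
  have hsmall : ∀ μ, 0 < μ → smallPart A b μ ≤ ENNReal.ofReal (μ ^ (2 - r)) * C :=
    fun μ hμ => smallPart_le_ofReal_rpow_mul hr2
      (fun ν hν => le_biSup (fun lam => ENNReal.ofReal (lam ^ (r - 2)) * smallPart A b lam) hν) hμ
  have hgeom := (summable_two_pow_rpow (by linarith : -r < 0)).mul_left (2 ^ (2 - r))
  refine lt_of_le_of_lt (iSup₂_le fun lam ⟨hl0, hl1⟩ => ?_)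
    (ENNReal.mul_lt_top hgeom.tsum_ofReal_lt_top (ENNReal.add_lt_top.2 ⟨hsup, hS.lt_top⟩))
  calc ENNReal.ofReal (lam ^ r) * largeCount A b lam
      ≤ ∑' m : ℕ, ENNReal.ofReal (lam ^ r) * (ENNReal.ofReal (((lam * 2 ^ m) ^ 2)⁻¹) *
          (ENNReal.ofReal ((lam * 2 ^ (m + 1)) ^ (2 - r)) * C)) := by
        rw [ENNReal.tsum_mul_left]
        gcongr
        refine (largeCount_le_tsum_smallPart hA hl0).trans (ENNReal.tsum_le_tsum fun m => ?_)
        gcongr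
        exact hsmall _ (by positivity)
    _ = ∑' m : ℕ, ENNReal.ofReal (2 ^ (2 - r) * ((2 : ℝ) ^ m) ^ (-r)) * C := by
        refine tsum_congr fun m => ?_
        rw [← mul_assoc, ← mul_assoc, ← ENNReal.ofReal_mul (by positivity),
          ← ENNReal.ofReal_mul (by positivity), pow_succ (2 : ℝ) m,
          dyadic_scaling_above hl0 (by positivity)]
    _ = (∑' m : ℕ, ENNReal.ofReal (2 ^ (2 - r) * ((2 : ℝ) ^ m) ^ (-r))) * C :=
        ENNReal.tsum_mul_right

end WeakBesov

open WeakBesov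

theorem weakG_conditions_equiv_general
    (d : ℕ) (r : ℝ) (hr0 : 0 < r) (hr2 : r < 2)
    (E : Type) [Fintype E] (K : Type)
    (c : ℕ → K → E → ℝ)
    (hsum : Summable fun p : ℕ × K × E => (c p.1 p.2.1 p.2.2) ^ 2) :
    ((⨆ lam ∈ Set.Ioc (0 : ℝ) 1, ENNReal.ofReal (lam ^ (r - 2)) *
        ∑' j : ℕ, ∑ ε : E,
          (if (∑' k : K, (c j k ε) ^ 2) ≤ (2 : ℝ) ^ (d * j) * lam ^ 2
            then ENNReal.ofReal (∑' k : K, (c j k ε) ^ 2) else 0)) < ⊤)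
    ↔ ((⨆ lam ∈ Set.Ioc (0 : ℝ) 1, ENNReal.ofReal (lam ^ r) *
        ∑' j : ℕ, (2 : ℝ≥0∞) ^ (d * j) * ∑ ε : E,
          (if (2 : ℝ) ^ (d * j) * lam ^ 2 < ∑' k : K, (c j k ε) ^ 2
            then (1 : ℝ≥0∞) else 0)) < ⊤) := by
  let A : ℕ × E → ℝ := fun p => 2 ^ (d * p.1)
  let b : ℕ × E → ℝ := fun p => ∑' k : K, c p.1 k p.2 ^ 2
  have hS : ∑' p, ENNReal.ofReal (b p) ≠ ⊤ := by
    let e : (ℕ × E) × K ≃ ℕ × K × E :=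
      (Equiv.prodAssoc ℕ E K).trans (Equiv.prodCongr (Equiv.refl ℕ) (Equiv.prodComm E K))
    exact (e.summable_iff.2 hsum).prod.tsum_ofReal_ne_top
  have hsmall : ∀ lam : ℝ, (∑' j : ℕ, ∑ ε : E,
      if ∑' k : K, c j k ε ^ 2 ≤ (2 : ℝ) ^ (d * j) * lam ^ 2
        then ENNReal.ofReal (∑' k : K, c j k ε ^ 2) else 0) = smallPart A b lam := fun lam => by
    rw [smallPart, ENNReal.tsum_prod']
    simp only [tsum_fintype]
    rfl
  have hlarge : ∀ lam : ℝ, (∑' j : ℕ, (2 : ℝ≥0∞) ^ (d * j) * ∑ ε : E,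
      if (2 : ℝ) ^ (d * j) * lam ^ 2 < ∑' k : K, c j k ε ^ 2 then (1 : ℝ≥0∞) else 0) =
        largeCount A b lam := fun lam => by
    rw [largeCount, ENNReal.tsum_prod']
    simp only [tsum_fintype, Finset.mul_sum, A, ENNReal.ofReal_pow zero_le_two,
      ENNReal.ofReal_ofNat]
    rfl
  simp only [hsmall, hlarge]
  exact ⟨iSup_largeCount_lt_top_of_iSup_smallPart_lt_top (fun _ => by positivity) hS hr0 hr2,
    iSup_smallPart_lt_top_of_iSup_largeCount_lt_top hr2⟩

/-- equivalence of the two defining conditions of the global weak Besov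
space `W_G(r)` for an arbitrary square-summable coefficient array organized into
level-blocks `b_{j,ε} = Σ_k (c^ε_{j,k})²`. -/
theorem weakG_conditions_equiv
    (d : ℕ) (hd : 1 ≤ d) (r : ℝ) (hr0 : 0 < r) (hr2 : r < 2)
    (E : Type) [Fintype E] (K : Type) [Countable K]
    (c : ℕ → K → E → ℝ)
    (hsum : Summable fun p : ℕ × K × E => (c p.1 p.2.1 p.2.2) ^ 2) :
    ((⨆ lam ∈ Set.Ioc (0 : ℝ) 1, ENNReal.ofReal (lam ^ (r - 2)) *
        ∑' j : ℕ, ∑ ε : E,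
          (if (∑' k : K, (c j k ε) ^ 2) ≤ (2 : ℝ) ^ (d * j) * lam ^ 2
            then ENNReal.ofReal (∑' k : K, (c j k ε) ^ 2) else 0)) < ⊤)
    ↔ ((⨆ lam ∈ Set.Ioc (0 : ℝ) 1, ENNReal.ofReal (lam ^ r) *
        ∑' j : ℕ, (2 : ℝ≥0∞) ^ (d * j) * ∑ ε : E,
          (if (2 : ℝ) ^ (d * j) * lam ^ 2 < ∑' k : K, (c j k ε) ^ 2
            then (1 : ℝ≥0∞) else 0)) < ⊤) :=
  weakG_conditions_equiv_general d r hr0 hr2 E K c hsum
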